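/- Let S be a Cu-semigroup satisfying (O5) and let m ∈ ℕ. Then S has m-comparison if and only if for all x, y₀, …, y_m ∈ S and every γ ∈ (0,1): if λ(x) ≤ γ·λ(y_j) for every functional λ on S and every j = 0, …, m, then x ≤ y₀+…+y_m. In particular, if S has m-comparison and x, y ∈ S satisfy λ(x) ≤ λ(y) for every functional λ on S, then x ≤ 2(m+1)·y. -/

import Mathlib

open scoped ENNReal

section CuPreamble

variable {S : Type*} [AddCommMonoid S] [PartialOrder S]

/-- The way-below (compact containment) relation: `x ≪ y` if for every increasing
sequence with a supremum above `y`, some term dominates `x`. -/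
def WayBelow (x y : S) : Prop :=
  ∀ (f : ℕ → S) (s : S), Monotone f → IsLUB (Set.range f) s → y ≤ s → ∃ n, x ≤ f n

/-- A Cu-semigroup: a positively ordered commutative monoid satisfying (O1)-(O4). -/
structure IsCuSemigroup (S : Type*) [AddCommMonoid S] [PartialOrder S] : Prop where
  zero_le : ∀ x : S, 0 ≤ x
  add_le_add : ∀ ⦃a b c d : S⦄, a ≤ b → c ≤ d → a + c ≤ b + d
  O1 : ∀ f : ℕ → S, Monotone f → ∃ s : S, IsLUB (Set.range f) s
  O2 : ∀ x : S, ∃ f : ℕ → S, (∀ n, WayBelow (f n) (f (n + 1))) ∧ IsLUB (Set.range f) x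
  O3 : ∀ ⦃x₁ x₂ y₁ y₂ : S⦄, WayBelow x₁ x₂ → WayBelow y₁ y₂ → WayBelow (x₁ + y₁) (x₂ + y₂)
  O4 : ∀ (f g : ℕ → S) (s t : S), Monotone f → Monotone g → IsLUB (Set.range f) s →
    IsLUB (Set.range g) t → IsLUB (Set.range fun n => f n + g n) (s + t)

/-- The axiom (O5), including the strengthened form. -/
def SatisfiesO5 (S : Type*) [AddCommMonoid S] [PartialOrder S] : Prop :=
  (∀ x' x y : S, WayBelow x' x → x ≤ y → ∃ z : S, x' + z ≤ y ∧ y ≤ x + z) ∧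
  (∀ x' x y w' w : S, WayBelow x' x → x + w ≤ y → WayBelow w' w →
    ∃ z : S, WayBelow w' z ∧ x' + z ≤ y ∧ y ≤ x + z)

/-- The axiom (O6). -/
def SatisfiesO6 (S : Type*) [AddCommMonoid S] [PartialOrder S] : Prop :=
  ∀ x' x y z : S, WayBelow x' x → x ≤ y + z →
    ∃ y' z' : S, x' ≤ y' + z' ∧ y' ≤ y ∧ y' ≤ x ∧ z' ≤ z ∧ z' ≤ x

/-- A functional on a Cu-semigroup: a map to `[0,∞]` preserving order, addition, zero,
and suprema of increasing sequences. -/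
structure IsFunctional (l : S → ℝ≥0∞) : Prop where
  mono : Monotone l
  map_zero : l 0 = 0
  map_add : ∀ x y : S, l (x + y) = l x + l y
  map_sup : ∀ (f : ℕ → S) (s : S), Monotone f → IsLUB (Set.range f) s → l s = ⨆ n, l (f n)

/-- Edwards' condition. -/
def EdwardsCondition (S : Type*) [AddCommMonoid S] [PartialOrder S] : Prop :=
  ∀ l : S → ℝ≥0∞, IsFunctional l → ∀ x y : S,
    sInf {r : ℝ≥0∞ | ∃ l₁ l₂ : S → ℝ≥0∞, IsFunctional l₁ ∧ IsFunctional l₂ ∧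
        (∀ s : S, l₁ s + l₂ s = l s) ∧ r = l₁ x + l₂ y} =
    sSup {r : ℝ≥0∞ | ∃ z : S, z ≤ x ∧ z ≤ y ∧ r = l z}

/-- A scale on a Cu-semigroup. -/
structure IsScale (Sg : Set S) : Prop where
  hered : ∀ ⦃x y : S⦄, y ≤ x → x ∈ Sg → y ∈ Sg
  supClosed : ∀ (f : ℕ → S) (s : S), Monotone f → (∀ n, f n ∈ Sg) →
    IsLUB (Set.range f) s → s ∈ Sg
  generates : ∀ x' x : S, WayBelow x' x → ∃ L : List S, (∀ z ∈ L, z ∈ Sg) ∧ x' ≤ L.sum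

/-- The `d`-fold amplification `Σ^{(d)}` of a scale. -/
def scaleAmp (Sg : Set S) : ℕ → Set S
  | 0 => {0}
  | d + 1 => {x : S | ∀ x' : S, WayBelow x' x →
      ∃ f : Fin (d + 1) → S, (∀ i, f i ∈ Sg) ∧ WayBelow x' (∑ i, f i)}

end CuPreamble

/-- `S` has `m`-comparison. -/
def MComparison {S : Type*} [AddCommMonoid S] [PartialOrder S] (m : ℕ) : Prop :=
  ∀ (x : S) (y : Fin (m + 1) → S),
    (∀ j, ∃ n : ℕ, (n + 1) • x ≤ n • y j) → x ≤ ∑ j, y j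

/-!
Functionals see `(n + 1) • x ≤ n • y` as `λ x ≤ n / (n + 1) · λ y`, which gives the easy direction.
Conversely, it suffices to find, for `t ≪ x`, some `n` with `(n + 1) • t ≤ n • y`. If there is
none, pick `t ≪ w ≪ x`. Since `t ≪ w`, a relation `n • w + c ≤ k • y + c` can be iterated with the
error `c` kept way below itself, so it forces `n ≤ k`; by Goodearl–Handelman there is then a
monotone additive `d` on the order ideal generated by `y` with `d y = 1 ≤ d w`. Extending `d` by
`∞` and regularizing it to `z ↦ sup {d w' | w' ≪ z}` yields a functional `λ` with
`λ y ≤ 1 ≤ λ x`, which contradicts `λ x ≤ γ · λ y` for `γ < 1`. The same construction applied to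
`d = 0` shows that `w` lies in the order ideal of `y` in the first place.
-/

section PartialState

variable {G : Type*} [AddCommGroup G] (P : AddSubmonoid G) (u : G)

/-- The graph of a partially defined state of the preordered group `(G, P)` with order unit `u`. -/
structure IsPartialState (Γ : AddSubgroup (G × ℝ)) : Prop where
  unit_mem : (u, 1) ∈ Γ
  nonneg : ∀ p ∈ Γ, p.1 ∈ P → 0 ≤ p.2

variable {P u}

variable (P) in
/-- The values at `x` forced from above by `Γ`: `s / n` whenever `(g, s) ∈ Γ` and `n • x ≤ g`. -/
def upperValues (Γ : AddSubgroup (G × ℝ)) (x : G) : Set ℝ :=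
  {b | ∃ p ∈ Γ, ∃ n : ℕ, 0 < n ∧ p.1 - n • x ∈ P ∧ p.2 = n * b}

namespace IsPartialState

variable {Γ : AddSubgroup (G × ℝ)}

-- The graph is functional because `0 ∈ P` and `-(0, r) = (0, -r)`.
theorem eq_of_mem (hΓ : IsPartialState P u Γ) {g : G} {r s : ℝ} (hr : (g, r) ∈ Γ)
    (hs : (g, s) ∈ Γ) : r = s := by
  have h₁ := hΓ.nonneg _ (Γ.sub_mem hr hs) (by simp)
  have h₂ := hΓ.nonneg _ (Γ.sub_mem hs hr) (by simp)
  simp only [Prod.snd_sub] at h₁ h₂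
  linarith

theorem sup_zmultiples (hΓ : IsPartialState P u Γ) {x : G} {β : ℝ}
    (hβ : ∀ p ∈ Γ, ∀ k : ℤ, p.1 + k • x ∈ P → 0 ≤ p.2 + k * β) :
    IsPartialState P u (Γ ⊔ AddSubgroup.zmultiples (x, β)) where
  unit_mem := le_sup_left (a := Γ) hΓ.unit_mem
  nonneg := by
    rintro _ hq
    obtain ⟨p, hp, _, ⟨k, rfl⟩, rfl⟩ := AddSubgroup.mem_sup.1 hq
    simpa using hβ p hp k

-- `m • (g + n • x) + n • (g' - m • x) = m • g + n • g'` lies in `P`.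
theorem neg_le_mul_of_mem_upperValues (hΓ : IsPartialState P u Γ) {x : G} {p : G × ℝ}
    (hp : p ∈ Γ) {n : ℕ} (hpx : p.1 + n • x ∈ P) {b : ℝ} (hb : b ∈ upperValues P Γ x) :
    -p.2 ≤ n * b := by
  obtain ⟨q, hq, m, hm, hqx, hqb⟩ := hb
  have := hΓ.nonneg _ (Γ.add_mem (Γ.nsmul_mem hp m) (Γ.nsmul_mem hq n)) (by
    convert P.add_mem (P.nsmul_mem hpx m) (P.nsmul_mem hqx n) using 1
    simp only [Prod.fst_add, Prod.smul_fst, smul_add, smul_sub, smul_smul, mul_comm m n]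
    abel)
  simp only [Prod.snd_add, Prod.smul_snd, nsmul_eq_mul, hqb] at this
  have hm' : (0 : ℝ) < m := by exact_mod_cast hm
  nlinarith

theorem upperValues_nonempty (hΓ : IsPartialState P u Γ) (hu : ∀ g, ∃ n : ℕ, n • u - g ∈ P)
    (x : G) : (upperValues P Γ x).Nonempty := by
  obtain ⟨N, hN⟩ := hu x
  exact ⟨N, _, by simpa using Γ.nsmul_mem hΓ.unit_mem N, 1, one_pos, by simpa using hN, by simp⟩

theorem bddBelow_upperValues (hΓ : IsPartialState P u Γ) (hu : ∀ g, ∃ n : ℕ, n • u - g ∈ P)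
    (x : G) : BddBelow (upperValues P Γ x) := by
  obtain ⟨N, hN⟩ := hu (-x)
  refine ⟨-N, fun b hb => ?_⟩
  have := hΓ.neg_le_mul_of_mem_upperValues (by simpa using Γ.nsmul_mem hΓ.unit_mem N) (n := 1)
    (by simpa using hN) hb
  simpa using this

/-- The largest admissible value at `x` is `sInf (upperValues P Γ x)`. -/
theorem exists_extension (hΓ : IsPartialState P u Γ) (hu : ∀ g, ∃ n : ℕ, n • u - g ∈ P)
    (x : G) : ∃ β : ℝ, (∀ p ∈ Γ, ∀ k : ℤ, p.1 + k • x ∈ P → 0 ≤ p.2 + k * β) ∧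
      ∀ r : ℝ, (∀ p ∈ Γ, ∀ n : ℕ, p.1 - n • x ∈ P → n * r ≤ p.2) → r ≤ β := by
  have hU := hΓ.upperValues_nonempty hu x
  refine ⟨sInf (upperValues P Γ x), fun p hp k hpk => ?_, fun r hr => le_csInf hU ?_⟩
  · obtain ⟨n, rfl | rfl⟩ := k.eq_nat_or_neg <;> rcases n.eq_zero_or_pos with rfl | hn
    · simpa using hΓ.nonneg p hp (by simpa using hpk)
    · have : -p.2 / n ≤ sInf (upperValues P Γ x) := le_csInf hU fun b hb => by
        rw [div_le_iff₀' (by exact_mod_cast hn)]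
        exact hΓ.neg_le_mul_of_mem_upperValues hp (by simpa using hpk) hb
      rw [div_le_iff₀' (by exact_mod_cast hn)] at this
      push_cast
      linarith
    · simpa using hΓ.nonneg p hp (by simpa using hpk)
    · have : sInf (upperValues P Γ x) ≤ p.2 / n :=
        csInf_le (hΓ.bddBelow_upperValues hu x)
          ⟨p, hp, n, hn, by simpa [sub_eq_add_neg] using hpk, by field_simp⟩
      rw [le_div_iff₀' (by exact_mod_cast hn)] at this
      push_cast
      linarith
  · rintro b ⟨p, hp, n, hn, hpx, hpb⟩
    have := hr p hp n hpx
    rw [hpb] at this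
    exact le_of_mul_le_mul_left this (by exact_mod_cast hn)

/-- Zorn's lemma: a maximal partial state above `Γ` is total by `exists_extension`. -/
theorem exists_addMonoidHom (hΓ : IsPartialState P u Γ) (hu : ∀ g, ∃ n : ℕ, n • u - g ∈ P) :
    ∃ F : G →+ ℝ, (∀ g ∈ P, 0 ≤ F g) ∧ ∀ p ∈ Γ, F p.1 = p.2 := by
  obtain ⟨Γm, hΓΓm, hmax⟩ := zorn_le_nonempty₀ {Γ' | IsPartialState P u Γ'}
    (fun c hc hchain Γ₀ hΓ₀ => ⟨sSup c,
      { unit_mem := AddSubgroup.mem_sSup_of_directedOn ⟨Γ₀, hΓ₀⟩ hchain.directedOn |>.2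
          ⟨Γ₀, hΓ₀, (hc hΓ₀).unit_mem⟩
        nonneg := fun p hp hpP => by
          obtain ⟨Γ', hΓ', hp'⟩ :=
            (AddSubgroup.mem_sSup_of_directedOn ⟨Γ₀, hΓ₀⟩ hchain.directedOn).1 hp
          exact (hc hΓ').nonneg p hp' hpP },
      fun _ => le_sSup⟩) Γ hΓ
  have hm : IsPartialState P u Γm := hmax.prop
  have htotal : ∀ g, ∃ r, (g, r) ∈ Γm := by
    intro g
    obtain ⟨β, hβ, -⟩ := hm.exists_extension hu g
    have hext := hm.sup_zmultiples hβ
    refine ⟨β, hmax.2 hext le_sup_left ?_⟩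
    exact le_sup_right (a := Γm) (AddSubgroup.mem_zmultiples _)
  choose F hF using htotal
  refine ⟨AddMonoidHom.mk' F fun g h => hm.eq_of_mem (hF (g + h)) ?_, fun g hg => ?_, ?_⟩
  · simpa using Γm.add_mem (hF g) (hF h)
  · simpa using hm.nonneg _ (hF g) hg
  · rintro ⟨g, r⟩ hp
    exact hm.eq_of_mem (hF g) (hΓΓm hp)

end IsPartialState

theorem nonneg_of_zsmul_mem (hu : ∀ g, ∃ n : ℕ, n • u - g ∈ P) {v : G}
    (huv : ∀ n k : ℕ, k • u - n • v ∈ P → n ≤ k) {k : ℤ} (hk : k • u ∈ P) : 0 ≤ k := by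
  by_contra! hneg
  obtain ⟨j, rfl⟩ : ∃ j : ℕ, k = -j := ⟨k.natAbs, by omega⟩
  have hj : 0 < j := by omega
  obtain ⟨M, hM⟩ := hu (j • v)
  -- subtracting `j • u ≤ 0` repeatedly from `j • v ≤ M • u` gives `j • v ≤ (M % j) • u`
  have hMu : M • u = (M % j) • u + (M / j) • j • u := by
    rw [smul_smul, ← add_nsmul, mul_comm, Nat.mod_add_div]
  have : (M % j) • u - j • v ∈ P := by
    rw [neg_zsmul, natCast_zsmul] at hk
    convert P.add_mem hM (P.nsmul_mem hk (M / j)) using 1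
    rw [hMu, smul_neg]
    abel
  exact absurd (huv j _ this) (not_le.2 (Nat.mod_lt M hj))

/-- Goodearl–Handelman extension of states. -/
theorem exists_state_one_le (hu : ∀ g, ∃ n : ℕ, n • u - g ∈ P) {v : G} (hv : v ∈ P)
    (huv : ∀ n k : ℕ, k • u - n • v ∈ P → n ≤ k) :
    ∃ F : G →+ ℝ, (∀ g ∈ P, 0 ≤ F g) ∧ F u = 1 ∧ 1 ≤ F v := by
  have hΓu : IsPartialState P u (AddSubgroup.zmultiples (u, 1)) :=
    ⟨AddSubgroup.mem_zmultiples _, by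
      rintro _ ⟨k, rfl⟩ hk
      simpa using nonneg_of_zsmul_mem hu huv (by simpa using hk)⟩
  obtain ⟨β, hβ, hβmax⟩ := hΓu.exists_extension hu v
  obtain ⟨F, hFP, hFΓ⟩ := (hΓu.sup_zmultiples hβ).exists_addMonoidHom hu
  refine ⟨F, hFP, by simpa using hFΓ _ (le_sup_left (a := AddSubgroup.zmultiples (u, 1))
    hΓu.unit_mem), ?_⟩
  rw [hFΓ (v, β) (le_sup_right (a := AddSubgroup.zmultiples (u, 1))
    (AddSubgroup.mem_zmultiples _))]
  refine hβmax 1 ?_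
  rintro _ ⟨k, rfl⟩ n hn
  simp only [Prod.smul_fst, Prod.smul_snd, zsmul_eq_mul, mul_one] at hn ⊢
  have hk : 0 ≤ k :=
    nonneg_of_zsmul_mem hu huv (by simpa using P.add_mem hn (P.nsmul_mem hv n))
  lift k to ℕ using hk
  exact_mod_cast huv n k (by simpa using hn)

end PartialState

section OrderedMonoid

open Algebra GrothendieckAddGroup

variable {M : Type*} [AddCommMonoid M] [PartialOrder M] [IsOrderedAddMonoid M]

variable (M) in
def grothendieckCone : AddSubmonoid (GrothendieckAddGroup M) where
  carrier := {g | ∃ a b : M, b ≤ a ∧ g = of a - of b}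
  add_mem' := by
    rintro _ _ ⟨a, b, hab, rfl⟩ ⟨a', b', hab', rfl⟩
    exact ⟨a + a', b + b', add_le_add hab hab', by simp only [map_add]; abel⟩
  zero_mem' := ⟨0, 0, le_rfl, by simp⟩

theorem of_sub_of_mem_grothendieckCone_iff {a b : M} :
    of a - of b ∈ grothendieckCone M ↔ ∃ c, b + c ≤ a + c := by
  constructor
  · rintro ⟨a', b', hab', h⟩
    rw [sub_eq_sub_iff_add_eq_add, ← map_add, ← map_add] at h
    obtain ⟨⟨e, _⟩, he⟩ := (AddLocalization.addMonoidOf ⊤).eq_iff_exists.1 h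
    refine ⟨b' + e, ?_⟩
    calc b + (b' + e) ≤ b + (a' + e) := by gcongr
      _ = e + (a' + b) := by abel
      _ = e + (a + b') := he.symm
      _ = a + (b' + e) := by abel
  · rintro ⟨c, hc⟩
    exact ⟨a + c, b + c, hc, by simp only [map_add]; abel⟩

theorem exists_monotone_addMonoidHom_real (hpos : ∀ a : M, 0 ≤ a) {u v : M}
    (hu : ∀ a, ∃ n : ℕ, a ≤ n • u) (huv : ∀ (n k : ℕ) (c : M), n • v + c ≤ k • u + c → n ≤ k) :
    ∃ F : M →+ ℝ, Monotone F ∧ F u = 1 ∧ 1 ≤ F v := by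
  have hmem {a b : M} (h : b ≤ a) : of a - of b ∈ grothendieckCone M := ⟨a, b, h, rfl⟩
  have hunit (g : GrothendieckAddGroup M) : ∃ n : ℕ, n • of u - g ∈ grothendieckCone M := by
    obtain ⟨⟨a, b⟩, hab⟩ := (AddLocalization.addMonoidOf ⊤).surj g
    change g + of (b : M) = of a at hab
    obtain ⟨n, hn⟩ := hu a
    refine ⟨n, ?_⟩
    convert hmem (le_add_of_le_of_nonneg hn (hpos b)) using 1
    rw [eq_sub_of_add_eq hab, map_add, map_nsmul]
    abel
  obtain ⟨F, hFP, hFu, hFv⟩ := exists_state_one_le (v := of v) hunit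
    (by simpa using hmem (hpos v))
    fun n k h => by
      obtain ⟨c, hc⟩ := (of_sub_of_mem_grothendieckCone_iff (a := k • u) (b := n • v)).1
        (by simpa only [map_nsmul] using h)
      exact huv n k c hc
  refine ⟨F.comp of, fun a b hab => ?_, hFu, hFv⟩
  have := hFP _ (hmem hab)
  rwa [map_sub, sub_nonneg] at this

variable (M) in
def multiplesIdeal (u : M) : AddSubmonoid M where
  carrier := {a | ∃ n : ℕ, a ≤ n • u}
  add_mem' := by
    rintro a b ⟨m, hm⟩ ⟨n, hn⟩
    exact ⟨m + n, by rw [add_nsmul]; exact add_le_add hm hn⟩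
  zero_mem' := ⟨0, by simp⟩

theorem isLowerSet_multiplesIdeal (u : M) : IsLowerSet (multiplesIdeal M u : Set M) :=
  fun _ _ hab ⟨n, hn⟩ => ⟨n, hab.trans hn⟩

theorem exists_monotone_extension_top (hpos : ∀ a : M, 0 ≤ a) {I : AddSubmonoid M}
    (hI : IsLowerSet (I : Set M)) (f : I →+ ℝ≥0∞) (hf : Monotone f) :
    ∃ d : M →+ ℝ≥0∞, Monotone d ∧ (∀ a : I, d a = f a) ∧ ∀ z ∉ I, d z = ⊤ := by
  classical
  have hleft {a b : M} (h : a + b ∈ I) : a ∈ I := hI (le_add_of_nonneg_right (hpos b)) h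
  have hright {a b : M} (h : a + b ∈ I) : b ∈ I := hI (le_add_of_nonneg_left (hpos a)) h
  refine ⟨{ toFun := fun z => if h : z ∈ I then f ⟨z, h⟩ else ⊤
            map_zero' := by simp only [dif_pos I.zero_mem]; exact f.map_zero
            map_add' := fun a b => ?_ },
    fun a b hab => ?_, fun a => by simp, fun z hz => by simp [hz]⟩
  · by_cases hab : a + b ∈ I
    · simp only [dif_pos hab, dif_pos (hleft hab), dif_pos (hright hab), ← map_add]
      rfl
    · have : ¬ (a ∈ I ∧ b ∈ I) := fun h => hab (I.add_mem h.1 h.2)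
      rcases not_and_or.1 this with ha | hb <;> simp [*]
  · by_cases hb : b ∈ I
    · have ha : a ∈ I := hI hab hb
      simp only [AddMonoidHom.coe_mk, ZeroHom.coe_mk, dif_pos hb, dif_pos ha]
      exact hf (show (⟨a, ha⟩ : I) ≤ ⟨b, hb⟩ from hab)
    · simp [hb]

theorem exists_monotone_addMonoidHom_ennreal (hpos : ∀ a : M, 0 ≤ a) {u v : M}
    (hv : v ∈ multiplesIdeal M u)
    (huv : ∀ (n k : ℕ), ∀ c ∈ multiplesIdeal M u, n • v + c ≤ k • u + c → n ≤ k) :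
    ∃ d : M →+ ℝ≥0∞, Monotone d ∧ d u = 1 ∧ 1 ≤ d v := by
  set I := multiplesIdeal M u
  have hu : u ∈ I := ⟨1, by simp⟩
  obtain ⟨F, hF, hFu, hFv⟩ := exists_monotone_addMonoidHom_real (M := I) (u := ⟨u, hu⟩)
    (v := ⟨v, hv⟩) (fun a => hpos (a : M)) (fun a => a.2)
    fun n k c h => huv n k c c.2 (by exact_mod_cast h)
  have hF0 (a : I) : 0 ≤ F a := by simpa using hF (show (0 : I) ≤ a from hpos a)
  obtain ⟨d, hd, hdI, -⟩ := exists_monotone_extension_top hpos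
    (isLowerSet_multiplesIdeal u)
    { toFun := fun a => ENNReal.ofReal (F a)
      map_zero' := by simp
      map_add' := fun a b => by simp only [map_add, ENNReal.ofReal_add (hF0 a) (hF0 b)] }
    fun a b hab => ENNReal.ofReal_le_ofReal (hF hab)
  refine ⟨d, hd, ?_, ?_⟩
  · simpa [hFu] using hdI ⟨u, hu⟩
  · simpa [hdI ⟨v, hv⟩] using ENNReal.ofReal_le_ofReal hFv

end OrderedMonoid

section CuSemigroup

section WayBelow

variable {S : Type*} [PartialOrder S]

theorem WayBelow.le {x y : S} (h : WayBelow x y) : x ≤ y := by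
  obtain ⟨_, hn⟩ := h (fun _ => y) y monotone_const (by simp [isLUB_singleton]) le_rfl
  exact hn

theorem WayBelow.trans_le {x y z : S} (h : WayBelow x y) (hyz : y ≤ z) : WayBelow x z :=
  fun f s hf hs hz => h f s hf hs (hyz.trans hz)

theorem LE.le.trans_wayBelow {x y z : S} (hxy : x ≤ y) (h : WayBelow y z) : WayBelow x z :=
  fun f s hf hs hz => (h f s hf hs hz).imp fun _ hn => hxy.trans hn

noncomputable def lowerReg (d : S → ℝ≥0∞) (z : S) : ℝ≥0∞ :=
  ⨆ (w : S) (_ : WayBelow w z), d w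

theorem le_lowerReg {d : S → ℝ≥0∞} {w z : S} (h : WayBelow w z) : d w ≤ lowerReg d z :=
  le_iSup₂ (f := fun w (_ : WayBelow w z) => d w) w h

theorem lowerReg_le {d : S → ℝ≥0∞} (hd : Monotone d) (z : S) : lowerReg d z ≤ d z :=
  iSup₂_le fun _ h => hd h.le

end WayBelow

variable {S : Type*} [AddCommMonoid S] [PartialOrder S]

theorem IsFunctional.map_nsmul {l : S → ℝ≥0∞} (hl : IsFunctional l) (n : ℕ) (z : S) :
    l (n • z) = n * l z := by
  induction n with
  | zero => simpa using hl.map_zero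
  | succ n ih => rw [succ_nsmul, hl.map_add, ih]; push_cast; ring

namespace IsCuSemigroup

theorem isOrderedAddMonoid (hCu : IsCuSemigroup S) : IsOrderedAddMonoid S :=
  ⟨fun _ _ h _ => hCu.add_le_add h le_rfl, fun _ _ h _ => hCu.add_le_add le_rfl h⟩

theorem zero_wayBelow (hCu : IsCuSemigroup S) (x : S) : WayBelow 0 x :=
  fun f _ _ _ _ => ⟨0, hCu.zero_le (f 0)⟩

theorem nsmul_wayBelow_nsmul (hCu : IsCuSemigroup S) {a b : S} (h : WayBelow a b) (n : ℕ) :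
    WayBelow (n • a) (n • b) := by
  induction n with
  | zero => simpa using hCu.zero_wayBelow 0
  | succ n ih => simpa only [succ_nsmul] using hCu.O3 ih h

theorem exists_wayBelow_of_isLUB (hCu : IsCuSemigroup S) {w s : S} {f : ℕ → S}
    (h : WayBelow w s) (hf : Monotone f) (hs : IsLUB (Set.range f) s) :
    ∃ n, WayBelow w (f n) := by
  obtain ⟨t, ht, hts⟩ := hCu.O2 s
  obtain ⟨i, hi⟩ := h t s (monotone_nat_of_le_succ fun n => (ht n).le) hts le_rfl
  obtain ⟨n, hn⟩ := ht (i + 1) f s hf hs (hts.1 ⟨i + 2, rfl⟩)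
  exact ⟨n, hi.trans_wayBelow ((ht i).trans_le hn)⟩

theorem exists_wayBelow_wayBelow (hCu : IsCuSemigroup S) {t x : S} (h : WayBelow t x) :
    ∃ w, WayBelow t w ∧ WayBelow w x := by
  obtain ⟨f, hf, hfx⟩ := hCu.O2 x
  obtain ⟨n, hn⟩ :=
    hCu.exists_wayBelow_of_isLUB h (monotone_nat_of_le_succ fun n => (hf n).le) hfx
  exact ⟨f n, hn, (hf n).trans_le (hfx.1 ⟨n + 1, rfl⟩)⟩

theorem isFunctional_lowerReg (hCu : IsCuSemigroup S) (d : S →+ ℝ≥0∞) (hd : Monotone d) :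
    IsFunctional (lowerReg d) where
  mono _ _ hab := iSup₂_le fun _ h => le_lowerReg (h.trans_le hab)
  map_zero := le_antisymm ((lowerReg_le hd 0).trans d.map_zero.le) bot_le
  map_add a b := by
    refine le_antisymm (iSup₂_le fun w hw => ?_) ?_
    · obtain ⟨f, hf, hfa⟩ := hCu.O2 a
      obtain ⟨g, hg, hgb⟩ := hCu.O2 b
      have hfm : Monotone f := monotone_nat_of_le_succ fun n => (hf n).le
      have hgm : Monotone g := monotone_nat_of_le_succ fun n => (hg n).le
      obtain ⟨i, hi⟩ := hw _ _ (fun _ _ h => hCu.add_le_add (hfm h) (hgm h))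
        (hCu.O4 f g a b hfm hgm hfa hgb) le_rfl
      calc d w ≤ d (f i + g i) := hd hi
        _ = d (f i) + d (g i) := map_add d _ _
        _ ≤ lowerReg d a + lowerReg d b :=
          _root_.add_le_add (le_lowerReg ((hf i).trans_le (hfa.1 ⟨i + 1, rfl⟩)))
            (le_lowerReg ((hg i).trans_le (hgb.1 ⟨i + 1, rfl⟩)))
    · refine ENNReal.biSup_add_biSup_le' ⟨0, hCu.zero_wayBelow a⟩ ⟨0, hCu.zero_wayBelow b⟩
        fun w hw v hv => ?_
      rw [← map_add]
      exact le_lowerReg (hCu.O3 hw hv)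
  map_sup f s hf hs := by
    refine le_antisymm (iSup₂_le fun w hw => ?_) (iSup_le fun n => ?_)
    · obtain ⟨n, hn⟩ := hCu.exists_wayBelow_of_isLUB hw hf hs
      exact (le_lowerReg hn).trans (le_iSup (fun n => lowerReg d (f n)) n)
    · exact iSup₂_le fun _ h => le_lowerReg (h.trans_le (hs.1 ⟨n, rfl⟩))

theorem exists_le_nsmul_of_functional_le (hCu : IsCuSemigroup S) {x y w : S} {γ : ℝ≥0∞}
    (hxy : ∀ l, IsFunctional l → l x ≤ γ * l y) (hw : WayBelow w x) :
    ∃ n : ℕ, w ≤ n • y := by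
  have := hCu.isOrderedAddMonoid
  obtain ⟨d, hd, hdI, hdtop⟩ := exists_monotone_extension_top hCu.zero_le
    (isLowerSet_multiplesIdeal y) 0 fun _ _ _ => le_rfl
  by_contra hwI
  change w ∉ multiplesIdeal S y at hwI
  have hdy : lowerReg d y = 0 :=
    le_antisymm ((lowerReg_le hd y).trans (hdI ⟨y, 1, by simp⟩).le) bot_le
  have := (le_lowerReg (d := d) hw).trans (hxy _ (hCu.isFunctional_lowerReg d hd))
  rw [hdy, mul_zero, hdtop w hwI] at this
  exact ENNReal.top_ne_zero (le_bot_iff.1 this)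

theorem exists_wayBelow_add_le_add (hCu : IsCuSemigroup S) {a' a b c c' : S}
    (ha : WayBelow a' a) (h : a + c ≤ b + c) (hc : WayBelow c' c) :
    ∃ c'', WayBelow c'' c ∧ a' + c' ≤ b + c'' := by
  obtain ⟨f, hf, hfc⟩ := hCu.O2 c
  have hfm : Monotone f := monotone_nat_of_le_succ fun n => (hf n).le
  obtain ⟨n, hn⟩ := hCu.O3 ha hc (fun n => b + f n) (b + c)
    (fun _ _ h => hCu.add_le_add le_rfl (hfm h))
    (hCu.O4 _ f b c monotone_const hfm (by simp [isLUB_singleton]) hfc) h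
  exact ⟨f n, (hf n).trans_le (hfc.1 ⟨n + 1, rfl⟩), hn⟩

theorem nsmul_le_nsmul_add (hCu : IsCuSemigroup S) {a' a b c : S} (ha : WayBelow a' a)
    (h : a + c ≤ b + c) (k : ℕ) : k • a' ≤ k • b + c := by
  have := hCu.isOrderedAddMonoid
  suffices ∃ c', WayBelow c' c ∧ k • a' ≤ k • b + c' by
    obtain ⟨c', hc', hk⟩ := this
    exact hk.trans (by gcongr; exact hc'.le)
  induction k with
  | zero => exact ⟨0, hCu.zero_wayBelow c, by simp⟩
  | succ k ih =>
    obtain ⟨c', hc', hk⟩ := ih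
    obtain ⟨c'', hc'', hstep⟩ := hCu.exists_wayBelow_add_le_add ha h hc'
    refine ⟨c'', hc'', ?_⟩
    calc (k + 1) • a' = k • a' + a' := succ_nsmul a' k
      _ ≤ k • b + c' + a' := by gcongr
      _ = k • b + (a' + c') := by abel
      _ ≤ k • b + (b + c'') := by gcongr
      _ = (k + 1) • b + c'' := by rw [succ_nsmul]; abel

theorem exists_succ_nsmul_le_nsmul_of_add_le_add (hCu : IsCuSemigroup S) {t' t y c : S} {p q N : ℕ}
    (ht : WayBelow t' t) (h : q • t + c ≤ p • y + c) (hpq : p < q) (hc : c ≤ N • y) :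
    ∃ n : ℕ, (n + 1) • t' ≤ n • y := by
  have := hCu.isOrderedAddMonoid
  refine ⟨(N + 1) * p + N, ?_⟩
  calc ((N + 1) * p + N + 1) • t' ≤ ((N + 1) * q) • t' :=
        nsmul_le_nsmul_left (hCu.zero_le t') (by nlinarith)
    _ = (N + 1) • q • t' := mul_nsmul' t' _ _
    _ ≤ (N + 1) • p • y + c := hCu.nsmul_le_nsmul_add (hCu.nsmul_wayBelow_nsmul ht q) h _
    _ ≤ (N + 1) • p • y + N • y := by gcongr
    _ = ((N + 1) * p + N) • y := by rw [← mul_nsmul', ← add_nsmul]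

theorem exists_succ_nsmul_le_nsmul_of_functional_le (hCu : IsCuSemigroup S) {x y t : S}
    {γ : ℝ≥0∞} (hγ : γ < 1) (hxy : ∀ l, IsFunctional l → l x ≤ γ * l y) (ht : WayBelow t x) :
    ∃ n : ℕ, (n + 1) • t ≤ n • y := by
  have := hCu.isOrderedAddMonoid
  obtain ⟨w, htw, hwx⟩ := hCu.exists_wayBelow_wayBelow ht
  by_contra! hR
  obtain ⟨d, hd, hdy, hdw⟩ := exists_monotone_addMonoidHom_ennreal hCu.zero_le
    (hCu.exists_le_nsmul_of_functional_le hxy hwx) fun n k c hc h => by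
      obtain ⟨N, hN⟩ := hc
      by_contra! hkn
      obtain ⟨m, hm⟩ := hCu.exists_succ_nsmul_le_nsmul_of_add_le_add htw h hkn hN
      exact hR m hm
  have : (1 : ℝ≥0∞) ≤ γ := calc
    1 ≤ d w := hdw
    _ ≤ lowerReg d x := le_lowerReg hwx
    _ ≤ γ * lowerReg d y := hxy _ (hCu.isFunctional_lowerReg d hd)
    _ ≤ γ * 1 := by gcongr; exact (lowerReg_le hd y).trans hdy.le
    _ = γ := mul_one γ
  exact absurd hγ (not_lt.2 this)

end IsCuSemigroup

end CuSemigroup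

theorem ENNReal.succ_mul_le_mul_of_le {a b : ℝ≥0∞} {n N : ℕ} (h : (n + 1) * a ≤ n * b)
    (hnN : n ≤ N) : (N + 1) * a ≤ N * b := by
  have hab : a ≤ b := by
    refine (ENNReal.mul_le_mul_iff_right (a := (n + 1 : ℝ≥0∞)) (by simp) (by simp)).1 ?_
    exact h.trans (by gcongr; exact le_self_add)
  obtain ⟨r, rfl⟩ := Nat.exists_eq_add_of_le hnN
  push_cast
  calc (n + r + 1) * a = (n + 1) * a + r * a := by ring
    _ ≤ n * b + r * b := by gcongr
    _ = (n + r) * b := by ring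

section MComparison

variable {S : Type*} [AddCommMonoid S] [PartialOrder S] {m : ℕ}

theorem MComparison.le_sum_of_functional_le (hM : MComparison (S := S) m)
    (hCu : IsCuSemigroup S) {x : S} {y : Fin (m + 1) → S} {γ : ℝ≥0∞} (hγ : γ < 1)
    (h : ∀ l, IsFunctional l → ∀ j, l x ≤ γ * l (y j)) : x ≤ ∑ j, y j := by
  obtain ⟨f, hf, hfx⟩ := hCu.O2 x
  refine hfx.2 ?_
  rintro _ ⟨k, rfl⟩
  exact hM (f k) y fun j => hCu.exists_succ_nsmul_le_nsmul_of_functional_le hγ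
    (fun l hl => h l hl j) ((hf k).trans_le (hfx.1 ⟨k + 1, rfl⟩))

theorem mComparison_of_functional_le
    (h : ∀ (x : S) (y : Fin (m + 1) → S) (γ : ℝ≥0∞), 0 < γ → γ < 1 →
      (∀ l, IsFunctional l → ∀ j, l x ≤ γ * l (y j)) → x ≤ ∑ j, y j) :
    MComparison (S := S) m := by
  intro x y hxy
  choose n hn using hxy
  set N : ℕ := Finset.univ.sup n + 1
  have hN : (N : ℝ≥0∞) + 1 ≠ 0 := by simp
  have hN' : (N : ℝ≥0∞) + 1 ≠ ⊤ := by simp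
  refine h x y (N / (N + 1)) (ENNReal.div_pos (by simp [N]) hN') ?_ fun l hl j => ?_
  · rw [ENNReal.div_lt_iff (Or.inl hN) (Or.inl hN'), one_mul]
    exact ENNReal.lt_add_right (by simp) one_ne_zero
  · have hj := hl.mono (hn j)
    rw [hl.map_nsmul, hl.map_nsmul] at hj
    push_cast at hj
    have := ENNReal.succ_mul_le_mul_of_le hj ((Finset.le_sup (Finset.mem_univ j)).trans
      (Nat.le_succ _) : n j ≤ N)
    rw [← ENNReal.mul_div_right_comm, ENNReal.le_div_iff_mul_le (Or.inl hN) (Or.inl hN'), mul_comm]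
    exact this

theorem MComparison.le_nsmul_of_functional_le (hM : MComparison (S := S) m)
    (hCu : IsCuSemigroup S) {x y : S} (h : ∀ l, IsFunctional l → l x ≤ l y) :
    x ≤ (2 * (m + 1)) • y := by
  have := hM.le_sum_of_functional_le hCu (x := x) (y := fun _ => 2 • y) (γ := 2⁻¹)
    (ENNReal.inv_lt_one.2 ENNReal.one_lt_two) fun l hl _ => by
      rw [hl.map_nsmul, Nat.cast_ofNat, ← mul_assoc,
        ENNReal.inv_mul_cancel two_ne_zero ENNReal.ofNat_ne_top, one_mul]
      exact h l hl
  simpa [Finset.sum_const, mul_comm 2, mul_nsmul'] using this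

end MComparison

theorem stmt_9_general {S : Type*} [AddCommMonoid S] [PartialOrder S]
    (hCu : IsCuSemigroup S) (m : ℕ) :
    (MComparison (S := S) m ↔
      (∀ (x : S) (y : Fin (m + 1) → S) (γ : ℝ≥0∞), 0 < γ → γ < 1 →
        (∀ l : S → ℝ≥0∞, IsFunctional l → ∀ j, l x ≤ γ * l (y j)) →
        x ≤ ∑ j, y j)) ∧
    (MComparison (S := S) m →
      ∀ x y : S, (∀ l : S → ℝ≥0∞, IsFunctional l → l x ≤ l y) →
        x ≤ (2 * (m + 1)) • y) :=
  ⟨⟨fun hM _ _ _ _ hγ h => hM.le_sum_of_functional_le hCu hγ h, mComparison_of_functional_le⟩,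
    fun hM _ _ h => hM.le_nsmul_of_functional_le hCu h⟩

/-- Characterization of `m`-comparison in terms of functionals; in particular, under
`m`-comparison, comparison of functionals gives comparison up to the factor `2(m+1)`. -/
theorem stmt_9 {S : Type*} [AddCommMonoid S] [PartialOrder S]
    (hCu : IsCuSemigroup S) (hO5 : SatisfiesO5 S) (m : ℕ) :
    (MComparison (S := S) m ↔
      (∀ (x : S) (y : Fin (m + 1) → S) (γ : ℝ≥0∞), 0 < γ → γ < 1 →
        (∀ l : S → ℝ≥0∞, IsFunctional l → ∀ j, l x ≤ γ * l (y j)) →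
        x ≤ ∑ j, y j)) ∧
    (MComparison (S := S) m →
      ∀ x y : S, (∀ l : S → ℝ≥0∞, IsFunctional l → l x ≤ l y) →
        x ≤ (2 * (m + 1)) • y) :=
  stmt_9_general hCu m
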